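/- arXiv:2010.02017 — 4 statements merged into one kernel-verified Lean document; each statement's English description precedes it below -/
import Mathlib

section
/- Under the link model hypotheses and condition (Eq. 1), the two continuous clocks never drift apart by more than half the buffer size minus the access-time margin: for all t ≥ 0, |c_s(t) − c_r(t)| ≤ N/2 − f⁺·max{τ_s, τ_r}. (Lemma 1 of the paper, the key bound for correctness of the threshold controller ContTh(𝒯).) -/
/-!
Let `d = c_s - c_r` and `T = T_ctr + T_osc`. The rate bounds give `d' ≤ f⁺ - s⁻`, and once `d` has
stayed at least `𝒯` for a whole delay `T` the controller forces `d' ≤ s⁺ - f⁻ ≤ 0`. So after the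
last time `t₀` with `d t₀ ≤ 𝒯`, the difference grows for at most time `T` and then decreases, which
keeps it below `𝒯 + (f⁺ - s⁻) T ≤ N/2 - f⁺ max{τ_s, τ_r}` by Eq. (1). The same holds for `c_r - c_s`.
-/

open Set

lemma exists_last_le_of_continuousOn {f : ℝ → ℝ} {a b c : ℝ} (hab : a ≤ b)
    (hf : ContinuousOn f (Icc a b)) (ha : f a ≤ c) :
    ∃ t₀ ∈ Icc a b, f t₀ ≤ c ∧ ∀ τ ∈ Ioc t₀ b, c ≤ f τ := by
  set S := Icc a b ∩ f ⁻¹' Iic c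
  have hS : IsClosed S := hf.preimage_isClosed_of_isClosed isClosed_Icc isClosed_Iic
  have hSbdd : BddAbove S := ⟨b, fun x hx => hx.1.2⟩
  obtain ⟨hmem, hle⟩ := hS.csSup_mem ⟨a, left_mem_Icc.2 hab, ha⟩ hSbdd
  refine ⟨sSup S, hmem, hle, fun τ hτ => le_of_not_gt fun hτc => ?_⟩
  exact hτ.1.not_ge (le_csSup hSbdd ⟨⟨hmem.1.trans hτ.1.le, hτ.2⟩, hτc.le⟩)

section ThresholdControl

variable {d : ℝ → ℝ} {T 𝒯 : ℝ}

lemma antitoneOn_Icc_add_of_threshold_control (hd : Differentiable ℝ d)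
    (hctl : ∀ t, T ≤ t → (∀ τ ∈ Icc (t - T) t, 𝒯 ≤ d τ) → deriv d t ≤ 0)
    {a b : ℝ} (ha : 0 ≤ a) (habove : ∀ τ ∈ Ioc a b, 𝒯 ≤ d τ) :
    AntitoneOn d (Icc (a + T) b) := by
  refine antitoneOn_of_deriv_nonpos (convex_Icc _ _) hd.continuous.continuousOn
    hd.differentiableOn fun x hx => ?_
  rw [interior_Icc] at hx
  exact hctl x (by linarith [hx.1]) fun τ hτ =>
    habove τ ⟨by linarith [hx.1, hτ.1], hτ.2.trans hx.2.le⟩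

theorem le_add_mul_of_threshold_control (hd : Differentiable ℝ d) {K : ℝ} (hK : 0 ≤ K)
    (hT : 0 ≤ T) (h0 : d 0 ≤ 𝒯) (hslope : ∀ t, 0 ≤ t → deriv d t ≤ K)
    (hctl : ∀ t, T ≤ t → (∀ τ ∈ Icc (t - T) t, 𝒯 ≤ d τ) → deriv d t ≤ 0)
    {t : ℝ} (ht : 0 ≤ t) : d t ≤ 𝒯 + K * T := by
  obtain ⟨t₀, ⟨ht₀, ht₀t⟩, hdt₀, habove⟩ :=
    exists_last_le_of_continuousOn ht hd.continuous.continuousOn h0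
  have hgrowth : ∀ u ∈ Icc t₀ t, d u ≤ 𝒯 + K * (u - t₀) := fun u hu => by
    have := (convex_Ici 0).image_sub_le_mul_sub_of_deriv_le hd.continuous.continuousOn
      hd.differentiableOn (fun x hx => hslope x (interior_subset hx)) t₀ ht₀ u
      (ht₀.trans hu.1) hu.1
    linarith
  rcases le_or_gt t (t₀ + T) with hshort | hlong
  · calc d t ≤ 𝒯 + K * (t - t₀) := hgrowth t ⟨ht₀t, le_rfl⟩
      _ ≤ 𝒯 + K * T := by gcongr; linarith
  · have hanti := antitoneOn_Icc_add_of_threshold_control hd hctl ht₀ habove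
    calc d t ≤ d (t₀ + T) := hanti ⟨le_rfl, hlong.le⟩ ⟨hlong.le, le_rfl⟩ hlong.le
      _ ≤ 𝒯 + K * (t₀ + T - t₀) := hgrowth _ ⟨by linarith, hlong.le⟩
      _ = 𝒯 + K * T := by ring

end ThresholdControl

lemma clock_sub_le_of_controlled {sLo sHi fLo fHi Tctr Tosc 𝒯 : ℝ} (hsf : sHi ≤ fLo)
    (hTctr : 0 ≤ Tctr) (hTosc : 0 ≤ Tosc) {cs cr : ℝ → ℝ}
    (hcs : Differentiable ℝ cs) (hcr : Differentiable ℝ cr) (h0 : cs 0 - cr 0 ≤ 𝒯)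
    (hrate_s : ∀ t, 0 ≤ t → deriv cs t ∈ Icc sLo fHi)
    (hrate_r : ∀ t, 0 ≤ t → deriv cr t ∈ Icc sLo fHi)
    (hctl : ∀ t, Tctr + Tosc ≤ t →
      (∀ τ ∈ Icc (t - Tctr - Tosc) t, cs τ - cr τ ≥ 𝒯) →
      deriv cs t ≤ sHi ∧ fLo ≤ deriv cr t)
    {t : ℝ} (ht : 0 ≤ t) : cs t - cr t ≤ 𝒯 + (fHi - sLo) * (Tctr + Tosc) := by
  have hderiv : ∀ t, deriv (cs - cr) t = deriv cs t - deriv cr t := fun t =>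
    deriv_sub (hcs t) (hcr t)
  have hK : 0 ≤ fHi - sLo := sub_nonneg.2 ((hrate_s 0 le_rfl).1.trans (hrate_s 0 le_rfl).2)
  refine le_add_mul_of_threshold_control (d := cs - cr) (hcs.sub hcr) hK
    (add_nonneg hTctr hTosc) h0 (fun t ht => ?_) (fun t hT habove => ?_) ht
  · rw [hderiv]
    linarith [(hrate_s t ht).2, (hrate_r t ht).1]
  · have := hctl t hT fun τ hτ => habove τ (by rwa [sub_sub] at hτ)
    rw [hderiv]
    linarith

theorem clock_drift_bound_general
    (N sLo sHi fLo fHi δ Tctr Tosc τs τr 𝒯 : ℝ)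
    (hsf : sHi ≤ fLo)
    (hTctr : 0 ≤ Tctr) (hTosc : 0 ≤ Tosc)
    (cs cr : ℝ → ℝ)
    (hcs : Differentiable ℝ cs) (hcr : Differentiable ℝ cr)
    -- (C1): initial clock values
    (hinit_s : cs 0 ∈ Set.Ioc (-δ) 0) (hinit_r : cr 0 ∈ Set.Ioc (-δ) 0)
    -- rate bounds
    (hrate_s : ∀ t, 0 ≤ t → deriv cs t ∈ Set.Icc sLo fHi)
    (hrate_r : ∀ t, 0 ≤ t → deriv cr t ∈ Set.Icc sLo fHi)
    -- controlled response (L1 combined with C2, C3, C5)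
    (hctl_s : ∀ t, Tctr + Tosc ≤ t →
      (∀ τ ∈ Set.Icc (t - Tctr - Tosc) t, cs τ - cr τ ≥ 𝒯) →
      deriv cs t ≤ sHi ∧ fLo ≤ deriv cr t)
    (hctl_r : ∀ t, Tctr + Tosc ≤ t →
      (∀ τ ∈ Set.Icc (t - Tctr - Tosc) t, cr τ - cs τ ≥ 𝒯) →
      deriv cr t ≤ sHi ∧ fLo ≤ deriv cs t)
    -- Eq. (1)
    (hT1 : δ ≤ 𝒯)
    (hT2 : 𝒯 ≤ N / 2 - (fHi - sLo) * (Tosc + Tctr) - fHi * max τs τr) :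
    ∀ t, 0 ≤ t → |cs t - cr t| ≤ N / 2 - fHi * max τs τr := by
  intro t ht
  obtain ⟨hs0_lo, hs0_hi⟩ := hinit_s
  obtain ⟨hr0_lo, hr0_hi⟩ := hinit_r
  have hsr := clock_sub_le_of_controlled hsf hTctr hTosc hcs hcr (by linarith)
    hrate_s hrate_r hctl_s ht
  have hrs := clock_sub_le_of_controlled hsf hTctr hTosc hcr hcs (by linarith)
    hrate_r hrate_s hctl_r ht
  rw [add_comm Tosc] at hT2
  rw [abs_le]
  constructor <;> linarith

/-- Lemma 1 of the paper: under the link model hypotheses and Eq. (1),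
the two continuous clocks never drift apart by more than half the buffer
size minus the access-time margin. -/
theorem clock_drift_bound
    (N sLo sHi fLo fHi δ Tctr Tosc τs τr 𝒯 : ℝ)
    (hN : 0 < N)
    (hsLo : 0 < sLo) (hs : sLo ≤ sHi) (hsf : sHi ≤ fLo) (hf : fLo ≤ fHi)
    (hδ0 : 0 < δ) (hδ1 : δ ≤ 1)
    (hTctr : 0 ≤ Tctr) (hTosc : 0 ≤ Tosc) (hτs : 0 ≤ τs) (hτr : 0 ≤ τr)
    (cs cr : ℝ → ℝ)
    (hcs : Differentiable ℝ cs) (hcr : Differentiable ℝ cr)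
    -- (C1): initial clock values
    (hinit_s : cs 0 ∈ Set.Ioc (-δ) 0) (hinit_r : cr 0 ∈ Set.Ioc (-δ) 0)
    -- rate bounds
    (hrate_s : ∀ t, 0 ≤ t → deriv cs t ∈ Set.Icc sLo fHi)
    (hrate_r : ∀ t, 0 ≤ t → deriv cr t ∈ Set.Icc sLo fHi)
    -- controlled response (L1 combined with C2, C3, C5)
    (hctl_s : ∀ t, Tctr + Tosc ≤ t →
      (∀ τ ∈ Set.Icc (t - Tctr - Tosc) t, cs τ - cr τ ≥ 𝒯) →
      deriv cs t ≤ sHi ∧ fLo ≤ deriv cr t)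
    (hctl_r : ∀ t, Tctr + Tosc ≤ t →
      (∀ τ ∈ Set.Icc (t - Tctr - Tosc) t, cr τ - cs τ ≥ 𝒯) →
      deriv cr t ≤ sHi ∧ fLo ≤ deriv cs t)
    -- Eq. (1)
    (hT1 : δ ≤ 𝒯)
    (hT2 : 𝒯 ≤ N / 2 - (fHi - sLo) * (Tosc + Tctr) - fHi * max τs τr) :
    ∀ t, 0 ≤ t → |cs t - cr t| ≤ N / 2 - fHi * max τs τr :=
  clock_drift_bound_general N sLo sHi fLo fHi δ Tctr Tosc τs τr 𝒯 hsf hTctr hTosc cs cr hcs hcr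
    hinit_s hinit_r hrate_s hrate_r hctl_s hctl_r hT1 hT2
end

section
/- Under the link model hypotheses and condition (Eq. 1), the address pointers stay strictly separated around the ring (Eq. 2 of the paper): for all t ≥ 0, f⁺·max{τ_s, τ_r} ≤ |p_s(t) − p_r(t)| ≤ N − f⁺·max{τ_s, τ_r}, where p_s(t) = c_s(t) + N/2 and p_r(t) = c_r(t) are the sender and receiver address pointers. -/
/-!
Let `g = c_s - c_r` and `K = 𝒯 + (f⁺ - s⁻)(T_ctr + T_osc)`. Since `g' ≤ f⁺ - s⁻`, whenever
`g(t) > K` the difference has stayed above `𝒯` throughout the window `[t - T_ctr - T_osc, t]`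
(and `t ≥ T_ctr + T_osc`, because `g(0) ≤ 𝒯`), so the controller forces
`g'(t) ≤ s⁺ - f⁻ ≤ 0`. A differentiable function that starts below `K` and cannot increase while
above `K` stays below `K`. By symmetry `|c_s - c_r| ≤ K`, and (Eq. 1) says exactly that
`K ≤ N/2 - f⁺·max{τ_s, τ_r}`.
-/

open Set

theorem image_le_of_deriv_nonpos_of_lt {g : ℝ → ℝ} {a K : ℝ} (hg : Differentiable ℝ g)
    (ha : g a ≤ K) (hder : ∀ τ, a < τ → K < g τ → deriv g τ ≤ 0) :
    ∀ t, a ≤ t → g t ≤ K := by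
  intro t hat
  by_contra! hlt
  obtain ⟨t₁, ⟨⟨hat₁, ht₁t⟩, ht₁K⟩, ht₁_last⟩ :=
    (isCompact_Icc.inter_right (isClosed_le hg.continuous continuous_const)).exists_isGreatest
      ⟨a, left_mem_Icc.2 hat, ha⟩
  have above : ∀ τ ∈ Ioo t₁ t, K < g τ := fun τ hτ => lt_of_not_ge fun hle =>
    hτ.1.not_ge (ht₁_last ⟨⟨hat₁.trans hτ.1.le, hτ.2.le⟩, hle⟩)
  have anti : AntitoneOn g (Icc t₁ t) :=
    antitoneOn_of_deriv_nonpos (convex_Icc _ _) hg.continuous.continuousOn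
      hg.differentiableOn fun τ hτ => by
        rw [interior_Icc] at hτ
        exact hder τ (hat₁.trans_lt hτ.1) (above τ hτ)
  exact hlt.not_ge ((anti (left_mem_Icc.2 ht₁t) (right_mem_Icc.2 ht₁t) ht₁t).trans ht₁K)

theorem le_add_mul_of_deriv_nonpos_of_window_ge {g : ℝ → ℝ} {L T 𝒯 : ℝ}
    (hg : Differentiable ℝ g) (hL : 0 ≤ L) (hT : 0 ≤ T) (hgL : ∀ t, 0 ≤ t → deriv g t ≤ L)
    (h0 : g 0 ≤ 𝒯) (hctl : ∀ t, T ≤ t → (∀ τ ∈ Icc (t - T) t, 𝒯 ≤ g τ) → deriv g t ≤ 0) :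
    ∀ t, 0 ≤ t → g t ≤ 𝒯 + L * T := by
  have growth : ∀ σ τ, 0 ≤ σ → σ ≤ τ → g τ - g σ ≤ L * (τ - σ) := fun σ τ hσ hστ =>
    (convex_Ici 0).image_sub_le_mul_sub_of_deriv_le hg.continuous.continuousOn
      hg.differentiableOn (fun x hx => hgL x (interior_subset hx)) σ hσ τ (hσ.trans hστ) hστ
  refine image_le_of_deriv_nonpos_of_lt hg (by nlinarith) fun τ hτ hK => ?_
  have hTτ : T ≤ τ := by
    by_contra! hτT
    nlinarith [growth 0 τ le_rfl hτ.le]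
  refine hctl τ hTτ fun σ ⟨hσl, hστ⟩ => ?_
  nlinarith [growth σ τ (by linarith) hστ]

theorem sub_le_of_controlled_rates {u v : ℝ → ℝ} {sLo sHi fLo fHi T 𝒯 : ℝ}
    (hu : Differentiable ℝ u) (hv : Differentiable ℝ v) (hsf : sHi ≤ fLo) (hT : 0 ≤ T)
    (hrate_u : ∀ t, 0 ≤ t → deriv u t ∈ Icc sLo fHi)
    (hrate_v : ∀ t, 0 ≤ t → deriv v t ∈ Icc sLo fHi) (h0 : u 0 - v 0 ≤ 𝒯)
    (hctl : ∀ t, T ≤ t → (∀ τ ∈ Icc (t - T) t, u τ - v τ ≥ 𝒯) →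
      deriv u t ≤ sHi ∧ fLo ≤ deriv v t) :
    ∀ t, 0 ≤ t → u t - v t ≤ 𝒯 + (fHi - sLo) * T := by
  have deriv_sub_eq : ∀ t, deriv (fun t => u t - v t) t = deriv u t - deriv v t := fun t =>
    deriv_sub (hu t) (hv t)
  refine le_add_mul_of_deriv_nonpos_of_window_ge (hu.sub hv)
    (by linarith [(hrate_u 0 le_rfl).1, (hrate_u 0 le_rfl).2]) hT (fun t ht => ?_) h0
    fun t hTt hwin => ?_
  · linarith [deriv_sub_eq t, (hrate_u t ht).2, (hrate_v t ht).1]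
  · linarith [deriv_sub_eq t, (hctl t hTt hwin).1, (hctl t hTt hwin).2]

theorem pointer_separation_general
    (N sLo sHi fLo fHi δ Tctr Tosc τs τr 𝒯 : ℝ)
    (hN : 0 < N)
    (hsf : sHi ≤ fLo)
    (hTctr : 0 ≤ Tctr) (hTosc : 0 ≤ Tosc)
    (cs cr : ℝ → ℝ)
    (hcs : Differentiable ℝ cs) (hcr : Differentiable ℝ cr)
    -- (C1): initial clock values
    (hinit_s : cs 0 ∈ Set.Ioc (-δ) 0) (hinit_r : cr 0 ∈ Set.Ioc (-δ) 0)
    -- rate bounds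
    (hrate_s : ∀ t, 0 ≤ t → deriv cs t ∈ Set.Icc sLo fHi)
    (hrate_r : ∀ t, 0 ≤ t → deriv cr t ∈ Set.Icc sLo fHi)
    -- controlled response (L1 combined with C2, C3, C5)
    (hctl_s : ∀ t, Tctr + Tosc ≤ t →
      (∀ τ ∈ Set.Icc (t - Tctr - Tosc) t, cs τ - cr τ ≥ 𝒯) →
      deriv cs t ≤ sHi ∧ fLo ≤ deriv cr t)
    (hctl_r : ∀ t, Tctr + Tosc ≤ t →
      (∀ τ ∈ Set.Icc (t - Tctr - Tosc) t, cr τ - cs τ ≥ 𝒯) →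
      deriv cr t ≤ sHi ∧ fLo ≤ deriv cs t)
    -- Eq. (1)
    (hT1 : δ ≤ 𝒯)
    (hT2 : 𝒯 ≤ N / 2 - (fHi - sLo) * (Tosc + Tctr) - fHi * max τs τr)
    -- address pointers: p_s(t) = c_s(t) + N/2, p_r(t) = c_r(t)
    :
    ∀ t, 0 ≤ t →
      fHi * max τs τr ≤ |(cs t + N / 2) - cr t| ∧
      |(cs t + N / 2) - cr t| ≤ N - fHi * max τs τr := by
  intro t ht
  have hT : 0 ≤ Tctr + Tosc := add_nonneg hTctr hTosc
  simp only [sub_sub] at hctl_s hctl_r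
  have sender_ahead := sub_le_of_controlled_rates hcs hcr hsf hT hrate_s hrate_r
    (by linarith [hinit_s.2, hinit_r.1]) hctl_s t ht
  have receiver_ahead := sub_le_of_controlled_rates hcr hcs hsf hT hrate_r hrate_s
    (by linarith [hinit_s.1, hinit_r.2]) hctl_r t ht
  constructor
  · exact le_abs.2 (Or.inl (by linarith))
  · exact abs_le.2 ⟨by linarith, by linarith⟩

theorem pointer_separation
    (N sLo sHi fLo fHi δ Tctr Tosc τs τr 𝒯 : ℝ)
    (hN : 0 < N)
    (hsLo : 0 < sLo) (hs : sLo ≤ sHi) (hsf : sHi ≤ fLo) (hf : fLo ≤ fHi)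
    (hδ0 : 0 < δ) (hδ1 : δ ≤ 1)
    (hTctr : 0 ≤ Tctr) (hTosc : 0 ≤ Tosc) (hτs : 0 ≤ τs) (hτr : 0 ≤ τr)
    (cs cr : ℝ → ℝ)
    (hcs : Differentiable ℝ cs) (hcr : Differentiable ℝ cr)
    -- (C1): initial clock values
    (hinit_s : cs 0 ∈ Set.Ioc (-δ) 0) (hinit_r : cr 0 ∈ Set.Ioc (-δ) 0)
    -- rate bounds
    (hrate_s : ∀ t, 0 ≤ t → deriv cs t ∈ Set.Icc sLo fHi)
    (hrate_r : ∀ t, 0 ≤ t → deriv cr t ∈ Set.Icc sLo fHi)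
    -- controlled response (L1 combined with C2, C3, C5)
    (hctl_s : ∀ t, Tctr + Tosc ≤ t →
      (∀ τ ∈ Set.Icc (t - Tctr - Tosc) t, cs τ - cr τ ≥ 𝒯) →
      deriv cs t ≤ sHi ∧ fLo ≤ deriv cr t)
    (hctl_r : ∀ t, Tctr + Tosc ≤ t →
      (∀ τ ∈ Set.Icc (t - Tctr - Tosc) t, cr τ - cs τ ≥ 𝒯) →
      deriv cr t ≤ sHi ∧ fLo ≤ deriv cs t)
    -- Eq. (1)
    (hT1 : δ ≤ 𝒯)
    (hT2 : 𝒯 ≤ N / 2 - (fHi - sLo) * (Tosc + Tctr) - fHi * max τs τr)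
    -- address pointers: p_s(t) = c_s(t) + N/2, p_r(t) = c_r(t)
    :
    ∀ t, 0 ≤ t →
      fHi * max τs τr ≤ |(cs t + N / 2) - cr t| ∧
      |(cs t + N / 2) - cr t| ≤ N - fHi * max τs τr :=
  pointer_separation_general N sLo sHi fLo fHi δ Tctr Tosc τs τr 𝒯 hN hsf hTctr hTosc cs cr hcs hcr
    hinit_s hinit_r hrate_s hrate_r hctl_s hctl_r hT1 hT2
end

section
/- Under the link model hypotheses and condition (Eq. 1), accesses of sender and receiver to the same buffer cell are separated in time (the core of Theorem 1, ensuring no buffer underrun or overflow): for all times t_s, t_r ≥ 0 and every integer k, if p_s(t_s) = p_r(t_r) + k·N (i.e., the sender pointer at time t_s and the receiver pointer at time t_r address the same cell modulo N), then |t_r − t_s| ≥ max{τ_s, τ_r}. -/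
/-!
The pointers address the same cell only when `c_s(t_s) - c_r(t_r) ≡ N/2 (mod N)`, which forces the
distance `|c_s(t_s) - c_r(t_r)|` is at least `N/2`. The controlled response keeps the clock skew
`|c_s - c_r|` below `𝒯 + (f⁺ - s⁻)(T_osc + T_ctr)`: once the skew exceeds `𝒯`, it grows at rate at
most `f⁺ - s⁻` for one reaction time and is non-increasing afterwards. During `|t_r - t_s|` the
receiver clock moves by at most `f⁺ |t_r - t_s|`, so Eq. (1) forces `|t_r - t_s| ≥ max τ_s τ_r`.
-/

open Set

theorem exists_last_le_of_continuous {g : ℝ → ℝ} (hg : Continuous g) {a b c : ℝ} (hab : a ≤ b)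
    (ha : g a ≤ c) : ∃ u ∈ Icc a b, g u ≤ c ∧ ∀ t ∈ Ioc u b, c < g t := by
  set S := Icc a b ∩ g ⁻¹' Iic c
  have hS : IsClosed S := isClosed_Icc.inter (isClosed_Iic.preimage hg)
  have hbdd : BddAbove S := ⟨b, fun x hx => hx.1.2⟩
  obtain ⟨hu, hgu⟩ := hS.csSup_mem ⟨a, ⟨le_rfl, hab⟩, ha⟩ hbdd
  refine ⟨sSup S, hu, hgu, fun t ht => not_le.1 fun hle => ?_⟩
  exact ht.1.not_ge (le_csSup hbdd ⟨⟨hu.1.trans ht.1.le, ht.2⟩, hle⟩)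

theorem le_add_mul_of_deriv_nonpos_after_delay {g : ℝ → ℝ} {θ C T : ℝ} (hg : Differentiable ℝ g)
    (hC : 0 ≤ C) (hT : 0 ≤ T) (h0 : g 0 ≤ θ) (hdC : ∀ t, 0 ≤ t → deriv g t ≤ C)
    (hdelay : ∀ t, T ≤ t → (∀ τ ∈ Icc (t - T) t, θ ≤ g τ) → deriv g t ≤ 0)
    {t : ℝ} (ht : 0 ≤ t) : g t ≤ θ + C * T := by
  obtain ⟨u, ⟨hu0, hut⟩, hgu, habove⟩ := exists_last_le_of_continuous hg.continuous ht h0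
  have hgrowth : ∀ y, u ≤ y → y ≤ u + T → g y ≤ θ + C * T := fun y huy hyT => by
    have := (convex_Ici (0 : ℝ)).image_sub_le_mul_sub_of_deriv_le hg.continuous.continuousOn
      hg.differentiableOn (fun s hs => hdC s (interior_subset hs)) u hu0 y (hu0.trans huy) huy
    nlinarith [mul_le_mul_of_nonneg_left (show y - u ≤ T by linarith) hC]
  rcases le_or_gt t (u + T) with hshort | hlong
  · exact hgrowth t hut hshort
  · have hanti : AntitoneOn g (Icc (u + T) t) := by
      refine antitoneOn_of_deriv_nonpos (convex_Icc _ _) hg.continuous.continuousOn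
        hg.differentiableOn fun x hx => ?_
      rw [interior_Icc] at hx
      refine hdelay x (by linarith [hx.1]) fun τ hτ => (habove τ ⟨?_, ?_⟩).le
      · linarith [hτ.1, hx.1]
      · exact hτ.2.trans hx.2.le
    calc g t ≤ g (u + T) := hanti ⟨le_rfl, hlong.le⟩ ⟨hlong.le, le_rfl⟩ hlong.le
      _ ≤ θ + C * T := hgrowth _ (by linarith) le_rfl

theorem sub_le_of_controlled_response {c₁ c₂ : ℝ → ℝ} {sLo sHi fLo fHi Tctr Tosc 𝒯 : ℝ}
    (hc₁ : Differentiable ℝ c₁) (hc₂ : Differentiable ℝ c₂) (hsf : sHi ≤ fLo) (hsLo_fHi : sLo ≤ fHi)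
    (hTctr : 0 ≤ Tctr) (hTosc : 0 ≤ Tosc) (h0 : c₁ 0 - c₂ 0 ≤ 𝒯)
    (hrate₁ : ∀ t, 0 ≤ t → deriv c₁ t ≤ fHi) (hrate₂ : ∀ t, 0 ≤ t → sLo ≤ deriv c₂ t)
    (hctl : ∀ t, Tctr + Tosc ≤ t →
      (∀ τ ∈ Icc (t - Tctr - Tosc) t, c₁ τ - c₂ τ ≥ 𝒯) → deriv c₁ t ≤ sHi ∧ fLo ≤ deriv c₂ t)
    {t : ℝ} (ht : 0 ≤ t) : c₁ t - c₂ t ≤ 𝒯 + (fHi - sLo) * (Tosc + Tctr) := by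
  have hderiv : ∀ x, deriv (fun y => c₁ y - c₂ y) x = deriv c₁ x - deriv c₂ x :=
    fun x => deriv_sub (hc₁ x) (hc₂ x)
  rw [add_comm Tosc]
  refine le_add_mul_of_deriv_nonpos_after_delay (g := fun y => c₁ y - c₂ y) (hc₁.sub hc₂)
    (sub_nonneg.2 hsLo_fHi) (add_nonneg hTctr hTosc) h0 (fun x hx => ?_) (fun x hx hwin => ?_) ht
  · rw [hderiv]
    linarith [hrate₁ x hx, hrate₂ x hx]
  · rw [hderiv]
    have := hctl x hx fun τ hτ => hwin τ (by rwa [sub_sub] at hτ)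
    linarith [this.1, this.2]

theorem half_le_abs_intCast_mul_sub_half (k : ℤ) {N : ℝ} (hN : 0 ≤ N) :
    N / 2 ≤ |k * N - N / 2| := by
  rcases le_or_gt k 0 with hk | hk
  · have hk' : (k : ℝ) ≤ 0 := by exact_mod_cast hk
    rw [abs_of_nonpos (by nlinarith)]
    nlinarith
  · have hk' : (1 : ℝ) ≤ k := by exact_mod_cast hk
    rw [abs_of_nonneg (by nlinarith)]
    nlinarith

theorem access_time_separation_general
    (N sLo sHi fLo fHi δ Tctr Tosc τs τr 𝒯 : ℝ)
    (hN : 0 < N)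
    (hsLo : 0 < sLo) (hs : sLo ≤ sHi) (hsf : sHi ≤ fLo) (hf : fLo ≤ fHi)
    (hTctr : 0 ≤ Tctr) (hTosc : 0 ≤ Tosc)
    (cs cr : ℝ → ℝ)
    (hcs : Differentiable ℝ cs) (hcr : Differentiable ℝ cr)
    -- (C1): initial clock values
    (hinit_s : cs 0 ∈ Set.Ioc (-δ) 0) (hinit_r : cr 0 ∈ Set.Ioc (-δ) 0)
    -- rate bounds
    (hrate_s : ∀ t, 0 ≤ t → deriv cs t ∈ Set.Icc sLo fHi)
    (hrate_r : ∀ t, 0 ≤ t → deriv cr t ∈ Set.Icc sLo fHi)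
    -- controlled response (L1 combined with C2, C3, C5)
    (hctl_s : ∀ t, Tctr + Tosc ≤ t →
      (∀ τ ∈ Set.Icc (t - Tctr - Tosc) t, cs τ - cr τ ≥ 𝒯) →
      deriv cs t ≤ sHi ∧ fLo ≤ deriv cr t)
    (hctl_r : ∀ t, Tctr + Tosc ≤ t →
      (∀ τ ∈ Set.Icc (t - Tctr - Tosc) t, cr τ - cs τ ≥ 𝒯) →
      deriv cr t ≤ sHi ∧ fLo ≤ deriv cs t)
    -- Eq. (1)
    (hT1 : δ ≤ 𝒯)
    (hT2 : 𝒯 ≤ N / 2 - (fHi - sLo) * (Tosc + Tctr) - fHi * max τs τr)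
    -- address pointers: p_s(t) = c_s(t) + N/2, p_r(t) = c_r(t)
    :
    ∀ tsnd trcv : ℝ, 0 ≤ tsnd → 0 ≤ trcv → ∀ k : ℤ,
      cs tsnd + N / 2 = cr trcv + (k : ℝ) * N →
      |trcv - tsnd| ≥ max τs τr := by
  intro tsnd trcv hsnd hrcv k hcell
  have hsLo_fHi : sLo ≤ fHi := (hs.trans hsf).trans hf
  have hskew_sr := sub_le_of_controlled_response hcs hcr hsf hsLo_fHi hTctr hTosc
    (by linarith [hinit_s.2, hinit_r.1]) (fun t ht => (hrate_s t ht).2)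
    (fun t ht => (hrate_r t ht).1) hctl_s hsnd
  have hskew_rs := sub_le_of_controlled_response hcr hcs hsf hsLo_fHi hTctr hTosc
    (by linarith [hinit_r.2, hinit_s.1]) (fun t ht => (hrate_r t ht).2)
    (fun t ht => (hrate_s t ht).1) hctl_r hsnd
  have hdrift : ‖cr trcv - cr tsnd‖ ≤ fHi * ‖trcv - tsnd‖ :=
    (convex_Ici 0).norm_image_sub_le_of_norm_deriv_le (fun t _ => hcr t)
      (fun t ht => abs_le.2 ⟨by linarith [(hrate_r t ht).1], (hrate_r t ht).2⟩) hsnd hrcv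
  have hfar := half_le_abs_intCast_mul_sub_half k hN.le
  rw [show (k : ℝ) * N - N / 2 = cs tsnd - cr trcv by linarith] at hfar
  by_contra! hclose
  have := mul_lt_mul_of_pos_left hclose (hsLo.trans_le hsLo_fHi)
  rw [Real.norm_eq_abs, Real.norm_eq_abs, abs_le] at hdrift
  cases le_abs'.1 hfar <;> linarith [hdrift.1, hdrift.2]

theorem access_time_separation
    (N sLo sHi fLo fHi δ Tctr Tosc τs τr 𝒯 : ℝ)
    (hN : 0 < N)
    (hsLo : 0 < sLo) (hs : sLo ≤ sHi) (hsf : sHi ≤ fLo) (hf : fLo ≤ fHi)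
    (hδ0 : 0 < δ) (hδ1 : δ ≤ 1)
    (hTctr : 0 ≤ Tctr) (hTosc : 0 ≤ Tosc) (hτs : 0 ≤ τs) (hτr : 0 ≤ τr)
    (cs cr : ℝ → ℝ)
    (hcs : Differentiable ℝ cs) (hcr : Differentiable ℝ cr)
    -- (C1): initial clock values
    (hinit_s : cs 0 ∈ Set.Ioc (-δ) 0) (hinit_r : cr 0 ∈ Set.Ioc (-δ) 0)
    -- rate bounds
    (hrate_s : ∀ t, 0 ≤ t → deriv cs t ∈ Set.Icc sLo fHi)
    (hrate_r : ∀ t, 0 ≤ t → deriv cr t ∈ Set.Icc sLo fHi)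
    -- controlled response (L1 combined with C2, C3, C5)
    (hctl_s : ∀ t, Tctr + Tosc ≤ t →
      (∀ τ ∈ Set.Icc (t - Tctr - Tosc) t, cs τ - cr τ ≥ 𝒯) →
      deriv cs t ≤ sHi ∧ fLo ≤ deriv cr t)
    (hctl_r : ∀ t, Tctr + Tosc ≤ t →
      (∀ τ ∈ Set.Icc (t - Tctr - Tosc) t, cr τ - cs τ ≥ 𝒯) →
      deriv cr t ≤ sHi ∧ fLo ≤ deriv cs t)
    -- Eq. (1)
    (hT1 : δ ≤ 𝒯)
    (hT2 : 𝒯 ≤ N / 2 - (fHi - sLo) * (Tosc + Tctr) - fHi * max τs τr)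
    -- address pointers: p_s(t) = c_s(t) + N/2, p_r(t) = c_r(t)
    :
    ∀ tsnd trcv : ℝ, 0 ≤ tsnd → 0 ≤ trcv → ∀ k : ℤ,
      cs tsnd + N / 2 = cr trcv + (k : ℝ) * N →
      |trcv - tsnd| ≥ max τs τr :=
  access_time_separation_general N sLo sHi fLo fHi δ Tctr Tosc τs τr 𝒯 hN hsLo hs hsf hf hTctr hTosc
    cs cr hcs hcr hinit_s hinit_r hrate_s hrate_r hctl_s hctl_r hT1 hT2
end

section
/- Under the link model hypotheses and condition (Eq. 1), and assuming additionally max{τ_s, τ_r} > 0, the sender and receiver address pointers never coincide modulo the ring size, i.e., they cannot 'pass' each other: for all t ≥ 0 and every integer k, p_s(t) − p_r(t) ≠ k·N, where p_s(t) = c_s(t) + N/2 and p_r(t) = c_r(t). -/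
/-!
The offset `c_s − c_r` grows at rate at most `f⁺ − s⁻`, and once it has stayed above `𝒯` for the
whole reaction time `T_ctr + T_osc` the controller makes it non-increasing. So it never exceeds
`𝒯 + (f⁺ − s⁻)(T_ctr + T_osc)`, and the same holds for `c_r − c_s`. By (Eq. 1) and
`f⁺ · max{τ_s, τ_r} > 0` this gives `|c_s − c_r| < N/2`, so `p_s − p_r` lies strictly between `0`
and `N` and cannot be a multiple of `N`.
-/

open Set

theorem sub_le_mul_sub_of_deriv_le_of_nonneg {d : ℝ → ℝ} {L a b : ℝ} (hd : Differentiable ℝ d)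
    (hL : ∀ t, 0 ≤ t → deriv d t ≤ L) (ha : 0 ≤ a) (hab : a ≤ b) : d b - d a ≤ L * (b - a) :=
  (convex_Ici 0).image_sub_le_mul_sub_of_deriv_le hd.continuous.continuousOn hd.differentiableOn
    (fun t ht => hL t (interior_subset ht)) a ha b (ha.trans hab) hab

theorem le_of_deriv_nonpos_above {d : ℝ → ℝ} {B t : ℝ} (hd : Differentiable ℝ d) (h0 : d 0 ≤ B)
    (hder : ∀ x, 0 ≤ x → B < d x → deriv d x ≤ 0) (ht : 0 ≤ t) : d t ≤ B := by
  refine le_of_forall_pos_le_add fun ε hε => ?_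
  set c := ε / (t + 1) with hc
  have hc0 : 0 < c := by positivity
  -- `d` can only touch the fence `B + c (x + 1)` where `d > B`, hence with slope `≤ 0 < c`
  have hfence : ∀ x ∈ Icc 0 t, d x ≤ B + c * (x + 1) := by
    refine image_le_of_deriv_right_lt_deriv_boundary (f' := deriv d) (B' := fun _ => c)
      hd.continuous.continuousOn (fun x _ => (hd x).hasDerivAt.hasDerivWithinAt)
      (by linarith) (fun x => ?_) fun x hx hx_eq => ?_
    · simpa using (((hasDerivAt_id x).add_const 1).const_mul c).const_add B
    · exact (hder x hx.1 (by rw [hx_eq]; nlinarith [hx.1])).trans_lt hc0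
  calc d t ≤ B + c * (t + 1) := hfence t ⟨ht, le_rfl⟩
    _ = B + ε := by rw [hc, div_mul_cancel₀ _ (by positivity)]

theorem le_add_mul_of_delayed_feedback {d : ℝ → ℝ} {L T 𝒯 t : ℝ} (hd : Differentiable ℝ d)
    (hL0 : 0 ≤ L) (hT : 0 ≤ T) (hL : ∀ x, 0 ≤ x → deriv d x ≤ L) (h0 : d 0 ≤ 𝒯)
    (hctl : ∀ x, T ≤ x → (∀ τ ∈ Icc (x - T) x, 𝒯 ≤ d τ) → deriv d x ≤ 0) (ht : 0 ≤ t) :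
    d t ≤ 𝒯 + L * T := by
  refine le_of_deriv_nonpos_above hd (by nlinarith) (fun x hx hdx => ?_) ht
  have hTx : T ≤ x := by
    by_contra! hxT
    have := sub_le_mul_sub_of_deriv_le_of_nonneg hd hL le_rfl hx
    nlinarith
  refine hctl x hTx fun τ hτ => ?_
  have := sub_le_mul_sub_of_deriv_le_of_nonneg hd hL (by linarith [hτ.1]) hτ.2
  nlinarith [hτ.1]

theorem clock_offset_le {f g : ℝ → ℝ} {sLo sHi fLo fHi T 𝒯 t : ℝ} (hsf : sHi ≤ fLo)
    (hLo : sLo ≤ fHi) (hT : 0 ≤ T) (hf : Differentiable ℝ f) (hg : Differentiable ℝ g)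
    (h0 : f 0 - g 0 ≤ 𝒯) (hrf : ∀ x, 0 ≤ x → deriv f x ≤ fHi)
    (hrg : ∀ x, 0 ≤ x → sLo ≤ deriv g x)
    (hctl : ∀ x, T ≤ x → (∀ τ ∈ Icc (x - T) x, f τ - g τ ≥ 𝒯) →
      deriv f x ≤ sHi ∧ fLo ≤ deriv g x)
    (ht : 0 ≤ t) : f t - g t ≤ 𝒯 + (fHi - sLo) * T := by
  have hderiv (x : ℝ) : deriv (fun y => f y - g y) x = deriv f x - deriv g x :=
    deriv_sub (hf x) (hg x)
  refine le_add_mul_of_delayed_feedback (d := fun y => f y - g y) (hf.sub hg) (by linarith) hT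
    (fun x hx => ?_) h0 (fun x hx hw => ?_) ht
  · linarith [hderiv x, hrf x hx, hrg x hx]
  · linarith [hderiv x, hctl x hx hw]

theorem int_mul_notMem_Ioo {N : ℝ} (hN : 0 < N) (k : ℤ) : (k : ℝ) * N ∉ Ioo 0 N := by
  rintro ⟨hpos, hlt⟩
  have hk0 : (0 : ℤ) < k := by exact_mod_cast pos_of_mul_pos_left hpos hN.le
  have hk1 : k < 1 := by exact_mod_cast (mul_lt_iff_lt_one_left hN).1 hlt
  omega

theorem pointers_never_coincide_general
    (N sLo sHi fLo fHi δ Tctr Tosc τs τr 𝒯 : ℝ)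
    (hN : 0 < N)
    (hsLo : 0 < sLo) (hs : sLo ≤ sHi) (hsf : sHi ≤ fLo) (hf : fLo ≤ fHi)
    (hTctr : 0 ≤ Tctr) (hTosc : 0 ≤ Tosc)
    (cs cr : ℝ → ℝ)
    (hcs : Differentiable ℝ cs) (hcr : Differentiable ℝ cr)
    -- (C1): initial clock values
    (hinit_s : cs 0 ∈ Set.Ioc (-δ) 0) (hinit_r : cr 0 ∈ Set.Ioc (-δ) 0)
    -- rate bounds
    (hrate_s : ∀ t, 0 ≤ t → deriv cs t ∈ Set.Icc sLo fHi)
    (hrate_r : ∀ t, 0 ≤ t → deriv cr t ∈ Set.Icc sLo fHi)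
    -- controlled response (L1 combined with C2, C3, C5)
    (hctl_s : ∀ t, Tctr + Tosc ≤ t →
      (∀ τ ∈ Set.Icc (t - Tctr - Tosc) t, cs τ - cr τ ≥ 𝒯) →
      deriv cs t ≤ sHi ∧ fLo ≤ deriv cr t)
    (hctl_r : ∀ t, Tctr + Tosc ≤ t →
      (∀ τ ∈ Set.Icc (t - Tctr - Tosc) t, cr τ - cs τ ≥ 𝒯) →
      deriv cr t ≤ sHi ∧ fLo ≤ deriv cs t)
    -- Eq. (1)
    (hT1 : δ ≤ 𝒯)
    (hT2 : 𝒯 ≤ N / 2 - (fHi - sLo) * (Tosc + Tctr) - fHi * max τs τr)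
    (hτpos : 0 < max τs τr)
    -- address pointers: p_s(t) = c_s(t) + N/2, p_r(t) = c_r(t)
    :
    ∀ t, 0 ≤ t → ∀ k : ℤ, (cs t + N / 2) - cr t ≠ (k : ℝ) * N := by
  intro t ht k hk
  have hLo : sLo ≤ fHi := hs.trans (hsf.trans hf)
  have hT : 0 ≤ Tctr + Tosc := add_nonneg hTctr hTosc
  have hsr := clock_offset_le (𝒯 := 𝒯) hsf hLo hT hcs hcr (by linarith [hinit_s.2, hinit_r.1])
    (fun x hx => (hrate_s x hx).2) (fun x hx => (hrate_r x hx).1)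
    (fun x hx hw => hctl_s x hx (by rwa [sub_sub])) ht
  have hrs := clock_offset_le (𝒯 := 𝒯) hsf hLo hT hcr hcs (by linarith [hinit_r.2, hinit_s.1])
    (fun x hx => (hrate_r x hx).2) (fun x hx => (hrate_s x hx).1)
    (fun x hx hw => hctl_r x hx (by rwa [sub_sub])) ht
  have hslack : 0 < fHi * max τs τr := mul_pos (by linarith) hτpos
  exact int_mul_notMem_Ioo hN k (hk ▸ ⟨by linarith, by linarith⟩)

theorem pointers_never_coincide
    (N sLo sHi fLo fHi δ Tctr Tosc τs τr 𝒯 : ℝ)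
    (hN : 0 < N)
    (hsLo : 0 < sLo) (hs : sLo ≤ sHi) (hsf : sHi ≤ fLo) (hf : fLo ≤ fHi)
    (hδ0 : 0 < δ) (hδ1 : δ ≤ 1)
    (hTctr : 0 ≤ Tctr) (hTosc : 0 ≤ Tosc) (hτs : 0 ≤ τs) (hτr : 0 ≤ τr)
    (cs cr : ℝ → ℝ)
    (hcs : Differentiable ℝ cs) (hcr : Differentiable ℝ cr)
    -- (C1): initial clock values
    (hinit_s : cs 0 ∈ Set.Ioc (-δ) 0) (hinit_r : cr 0 ∈ Set.Ioc (-δ) 0)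
    -- rate bounds
    (hrate_s : ∀ t, 0 ≤ t → deriv cs t ∈ Set.Icc sLo fHi)
    (hrate_r : ∀ t, 0 ≤ t → deriv cr t ∈ Set.Icc sLo fHi)
    -- controlled response (L1 combined with C2, C3, C5)
    (hctl_s : ∀ t, Tctr + Tosc ≤ t →
      (∀ τ ∈ Set.Icc (t - Tctr - Tosc) t, cs τ - cr τ ≥ 𝒯) →
      deriv cs t ≤ sHi ∧ fLo ≤ deriv cr t)
    (hctl_r : ∀ t, Tctr + Tosc ≤ t →
      (∀ τ ∈ Set.Icc (t - Tctr - Tosc) t, cr τ - cs τ ≥ 𝒯) →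
      deriv cr t ≤ sHi ∧ fLo ≤ deriv cs t)
    -- Eq. (1)
    (hT1 : δ ≤ 𝒯)
    (hT2 : 𝒯 ≤ N / 2 - (fHi - sLo) * (Tosc + Tctr) - fHi * max τs τr)
    (hτpos : 0 < max τs τr)
    -- address pointers: p_s(t) = c_s(t) + N/2, p_r(t) = c_r(t)
    :
    ∀ t, 0 ≤ t → ∀ k : ℤ, (cs t + N / 2) - cr t ≠ (k : ℝ) * N :=
  pointers_never_coincide_general N sLo sHi fLo fHi δ Tctr Tosc τs τr 𝒯 hN hsLo hs hsf hf hTctr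
    hTosc cs cr hcs hcr hinit_s hinit_r hrate_s hrate_r hctl_s hctl_r hT1 hT2 hτpos
end
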